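/- arXiv:1902.09218 — 6 statements merged into one kernel-verified Lean document; each statement's English description precedes it below -/
import Mathlib

section
/- Let G = {g₁,…,gₙ} be a ℤ-basis of ℤⁿ and suppose G₁ = {g₁,…,gₙ₋₁,w₁} and G₂ = {g₁,…,gₙ₋₁,w₂} are two ℤ-bases of ℤⁿ with w₁ ≠ gₙ ≠ w₂. Assume the 'Uniqueness Condition' holds for these bases: whenever ∑_{i∈I} rᵢ vᵢ = ∑_{j∈I'} r'ⱼ wⱼ with all rᵢ, r'ⱼ > 0, where the vᵢ are distinct elements of one basis and the wⱼ are distinct elements of another of the three bases, there is a bijection σ: I' → I with r'ⱼ = r_{σ(j)} and wⱼ = v_{σ(j)}. Then G₁ = G₂, i.e., w₁ = w₂. (Uniqueness of mutation in a G-system.) -/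
/-!
Expand `gₙ` in `G₁` as `∑ rᵢ • g₁ᵢ`. The coefficient `rₙ` of `w₁` is nonzero because `G` is
independent, and it is not positive: moving the negative terms to the other side, the
Uniqueness Condition would make `w₁` equal to `gₙ` or to some other vector of `G₁`. Likewise
`gₙ` has a negative coefficient on `w₂` in `G₂`. Equating the two expansions and adding a
common nonnegative combination of `g₁, …, gₙ₋₁` to both sides gives a relation between `G₁`
and `G₂` with only nonnegative coefficients and positive ones on `w₁` and `w₂`; by the
Uniqueness Condition `w₂` occurs in `G₁`, and since it is not among `g₁, …, gₙ₋₁`, it is `w₁`.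
-/

open Finset

namespace GSystem

variable {ι M : Type*} [Fintype ι] [AddCommGroup M]

def SatisfiesUniqueness (u v : ι → M) : Prop :=
  ∀ (I I' : Finset ι) (r r' : ι → ℤ),
    (∀ i ∈ I, 0 < r i) → (∀ j ∈ I', 0 < r' j) →
    (∑ i ∈ I, r i • u i) = (∑ j ∈ I', r' j • v j) →
    ∃ σ : ι → ι, Set.BijOn σ ↑I' ↑I ∧ ∀ j ∈ I', r' j = r (σ j) ∧ v j = u (σ j)

lemma sum_filter_pos_smul {a : ι → ℤ} (ha : 0 ≤ a) (x : ι → M) :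
    ∑ i ∈ univ with 0 < a i, a i • x i = ∑ i, a i • x i :=
  sum_filter_of_ne fun i _ hi ↦ (ha i).lt_of_ne' (left_ne_zero_of_smul hi)

lemma SatisfiesUniqueness.mem_range_of_sum_eq {u v : ι → M} (huv : SatisfiesUniqueness u v)
    {a b : ι → ℤ} (ha : 0 ≤ a) (hb : 0 ≤ b) (h : ∑ i, a i • u i = ∑ i, b i • v i)
    {j : ι} (hj : 0 < b j) : v j ∈ Set.range u := by
  rw [← sum_filter_pos_smul ha, ← sum_filter_pos_smul hb] at h
  obtain ⟨σ, -, hσ⟩ := huv _ _ a b (by simp) (by simp) h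
  exact ⟨σ j, ((hσ j (by simpa using hj)).2).symm⟩

lemma SatisfiesUniqueness.apply_eq_of_sum_eq {u v : ι → M} (huv : SatisfiesUniqueness u v)
    (hv : Function.Injective v) {k : ι} (hagree : ∀ i, i ≠ k → u i = v i) {c d : ι → ℤ}
    (hc : 0 ≤ c k) (hd : 0 < d k) (h : ∑ i, c i • u i = ∑ i, d i • v i) : u k = v k := by
  -- Adding `t = c⁻ + d⁻` to both sides makes all coefficients nonnegative; `t k = 0`.
  set t : ι → ℤ := fun i ↦ (c i)⁻ + (d i)⁻
  have ht : ∀ i, t i • u i = t i • v i := by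
    intro i
    rcases eq_or_ne i k with rfl | hi
    · simp [t, negPart_eq_zero.2 hc, negPart_eq_zero.2 hd.le]
    · rw [hagree i hi]
  have hsum : ∑ i, (c i + t i) • u i = ∑ i, (d i + t i) • v i := by
    simp only [add_smul, sum_add_distrib, h, ht]
  have hct : 0 ≤ fun i ↦ c i + t i := fun i ↦ by
    have := neg_le_negPart (c i); have := negPart_nonneg (d i)
    simp only [Pi.zero_apply, t]; omega
  have hdt : 0 ≤ fun i ↦ d i + t i := fun i ↦ by
    have := neg_le_negPart (d i); have := negPart_nonneg (c i)
    simp only [Pi.zero_apply, t]; omega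
  obtain ⟨i, hi⟩ := huv.mem_range_of_sum_eq hct hdt hsum (j := k)
    (by simp [t, negPart_eq_zero.2 hc, negPart_eq_zero.2 hd.le, hd])
  rcases eq_or_ne i k with rfl | hik
  · exact hi
  · exact absurd (hv (hi.symm.trans (hagree i hik))) hik.symm

lemma SatisfiesUniqueness.coeff_neg_of_sum_eq [DecidableEq ι] {u v : ι → M}
    (huv : SatisfiesUniqueness u v) (hu : LinearIndependent ℤ u) (hv : Function.Injective v)
    {k : ι} (hagree : ∀ i, i ≠ k → u i = v i) (hk : u k ≠ v k) {r : ι → ℤ}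
    (hr : ∑ i, r i • v i = u k) : r k < 0 := by
  have hsingle : ∑ i, (Pi.single k 1 : ι → ℤ) i • u i = u k := by
    simp [Pi.single_apply, ite_smul]
  have hle : r k ≤ 0 := by
    by_contra! hpos
    exact hk (huv.apply_eq_of_sum_eq hv hagree (by simp) hpos (hsingle.trans hr.symm))
  refine hle.lt_of_ne fun h0 ↦ ?_
  have hru : ∑ i, r i • u i = u k := by
    rw [← hr]
    refine sum_congr rfl fun i _ ↦ ?_
    rcases eq_or_ne i k with rfl | hi
    · simp [h0]
    · rw [hagree i hi]
  -- Linear independence forces `r = Pi.single k 1`, whose `k`-th coefficient is `1`.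
  have hrel : ∑ i, (r - Pi.single k 1 : ι → ℤ) i • u i = 0 := by
    simp only [Pi.sub_apply, sub_smul, sum_sub_distrib, hru, hsingle, sub_self]
  simpa [h0] using Fintype.linearIndependent_iff.mp hu _ hrel k

end GSystem

open GSystem

/-- Uniqueness of mutation in a `G`-system (part of Proposition-Definition
5.1.3): let `G = {g₁,…,gₙ}` be a ℤ-basis of ℤⁿ and let
`G₁ = {g₁,…,g_{n-1}, w₁}`, `G₂ = {g₁,…,g_{n-1}, w₂}` also be ℤ-bases of ℤⁿ with
`w₁ ≠ gₙ ≠ w₂`. If the Uniqueness Condition holds for all pairs among these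
three bases, then `G₁ = G₂`, i.e. `w₁ = w₂`. -/
theorem stmt0 (n : ℕ) (g : Fin (n + 1) → (Fin (n + 1) → ℤ))
    (w₁ w₂ : Fin (n + 1) → ℤ)
    (hw₁ : w₁ ≠ g (Fin.last n)) (hw₂ : w₂ ≠ g (Fin.last n))
    (g₁ g₂ : Fin (n + 1) → (Fin (n + 1) → ℤ))
    (hg₁ : g₁ = Function.update g (Fin.last n) w₁)
    (hg₂ : g₂ = Function.update g (Fin.last n) w₂)
    (hb : ∀ b ∈ ({g, g₁, g₂} : Set (Fin (n + 1) → Fin (n + 1) → ℤ)),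
      LinearIndependent ℤ b ∧ Submodule.span ℤ (Set.range b) = ⊤)
    (huniq : ∀ u ∈ ({g, g₁, g₂} : Set (Fin (n + 1) → Fin (n + 1) → ℤ)),
      ∀ v ∈ ({g, g₁, g₂} : Set (Fin (n + 1) → Fin (n + 1) → ℤ)),
      ∀ (I I' : Finset (Fin (n + 1))) (r r' : Fin (n + 1) → ℤ),
        (∀ i ∈ I, 0 < r i) → (∀ j ∈ I', 0 < r' j) →
        (∑ i ∈ I, r i • u i) = (∑ j ∈ I', r' j • v j) →
        ∃ σ : Fin (n + 1) → Fin (n + 1), Set.BijOn σ ↑I' ↑I ∧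
          ∀ j ∈ I', r' j = r (σ j) ∧ v j = u (σ j)) :
    w₁ = w₂ := by
  have hU : ∀ u ∈ ({g, g₁, g₂} : Set (Fin (n + 1) → Fin (n + 1) → ℤ)),
      ∀ v ∈ ({g, g₁, g₂} : Set (Fin (n + 1) → Fin (n + 1) → ℤ)), SatisfiesUniqueness u v :=
    huniq
  have hg : g ∈ ({g, g₁, g₂} : Set (Fin (n + 1) → Fin (n + 1) → ℤ)) := by simp
  have hg₁mem : g₁ ∈ ({g, g₁, g₂} : Set (Fin (n + 1) → Fin (n + 1) → ℤ)) := by simp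
  have hg₂mem : g₂ ∈ ({g, g₁, g₂} : Set (Fin (n + 1) → Fin (n + 1) → ℤ)) := by simp
  have hgg₁ : ∀ i, i ≠ Fin.last n → g i = g₁ i := fun i hi ↦ by simp [hg₁, hi]
  have hgg₂ : ∀ i, i ≠ Fin.last n → g i = g₂ i := fun i hi ↦ by simp [hg₂, hi]
  obtain ⟨r, hr⟩ := (Submodule.mem_span_range_iff_exists_fun ℤ).mp
    ((hb g₁ hg₁mem).2 ▸ Submodule.mem_top (x := g (Fin.last n)))
  obtain ⟨s, hs⟩ := (Submodule.mem_span_range_iff_exists_fun ℤ).mp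
    ((hb g₂ hg₂mem).2 ▸ Submodule.mem_top (x := g (Fin.last n)))
  have hr_neg : r (Fin.last n) < 0 := (hU g hg g₁ hg₁mem).coeff_neg_of_sum_eq (hb g hg).1
    (hb g₁ hg₁mem).1.injective hgg₁ (by simpa [hg₁] using hw₁.symm) hr
  have hs_neg : s (Fin.last n) < 0 := (hU g hg g₂ hg₂mem).coeff_neg_of_sum_eq (hb g hg).1
    (hb g₂ hg₂mem).1.injective hgg₂ (by simpa [hg₂] using hw₂.symm) hs
  have hlast := (hU g₁ hg₁mem g₂ hg₂mem).apply_eq_of_sum_eq (hb g₂ hg₂mem).1.injective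
    (fun i hi ↦ (hgg₁ i hi).symm.trans (hgg₂ i hi)) (c := -r) (d := -s)
    (by simpa using hr_neg.le) (by simpa using hs_neg)
    (by simp only [Pi.neg_apply, neg_smul, sum_neg_distrib, hr, hs])
  simpa [hg₁, hg₂] using hlast
end

section
/- Let G_T be a G-system at t₀. For any basis G_t in G_T and any subset J ⊆ G_{t₀}, there exists a unique basis G_{t'} in G_T satisfying: (a) J ⊆ G_{t'}; (b) writing each g_{k;t} = ∑ᵢ r'_{ik} g_{i;t'} in the basis G_{t'}, the coefficients r'_{ik} are ≥ 0 for every i with g_{i;t'} ∉ J. (Existence and uniqueness of the co-Bongartz completion T_J(G_t).) -/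
/-- A `G`-system at `t₀` (Definition 5.1.1): a collection of ℤ-bases of ℤⁿ, indexed by `T`,
satisfying the Mutation Condition, the Co-Bongartz Completion Condition and the
Uniqueness Condition. -/
structure GSystem (n : ℕ) (T : Type) (t₀ : T) where
  g : T → Fin n → (Fin n → ℤ)
  indep : ∀ t, LinearIndependent ℤ (g t)
  span : ∀ t, Submodule.span ℤ (Set.range (g t)) = ⊤
  mutation : ∀ (t : T) (k : Fin n), ∃ t₁ : T,
    Set.range (g t) ∩ Set.range (g t₁) = Set.range (g t) \ {g t k}
  coBongartz : ∀ (t : T) (J : Set (Fin n → ℤ)), J ⊆ Set.range (g t₀) →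
    ∃ t' : T, J ⊆ Set.range (g t') ∧
      ∀ (k : Fin n) (r : Fin n → ℤ), g t k = ∑ i, r i • g t' i →
        ∀ i, g t' i ∉ J → 0 ≤ r i
  uniqueness : ∀ (u v : T) (I I' : Finset (Fin n)) (r r' : Fin n → ℤ),
    (∀ i ∈ I, 0 < r i) → (∀ j ∈ I', 0 < r' j) →
    (∑ i ∈ I, r i • g u i) = (∑ j ∈ I', r' j • g v j) →
    ∃ σ : Fin n → Fin n, Set.BijOn σ ↑I' ↑I ∧
      ∀ j ∈ I', r' j = r (σ j) ∧ g v j = g u (σ j)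

/-- `G_{t'}` is a co-Bongartz completion of `J` with respect to `G_t`
(conditions (a) and (b) of Proposition-Definition 5.1.4). -/
def GSystem.IsCoB {n : ℕ} {T : Type} {t₀ : T} (S : GSystem n T t₀)
    (J : Set (Fin n → ℤ)) (t t' : T) : Prop :=
  J ⊆ Set.range (S.g t') ∧
  ∀ (k : Fin n) (r : Fin n → ℤ), S.g t k = ∑ i, r i • S.g t' i →
    ∀ i, S.g t' i ∉ J → 0 ≤ r i

/-- `G_{t'}` is the mutation of `G_t` at `g_{k;t}`, i.e.
`G_t ∩ G_{t'} = G_t \ {g_{k;t}}` (Proposition-Definition 5.1.3). -/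
def GSystem.IsMutationAt {n : ℕ} {T : Type} {t₀ : T} (S : GSystem n T t₀)
    (t t' : T) (k : Fin n) : Prop :=
  Set.range (S.g t) ∩ Set.range (S.g t') = Set.range (S.g t) \ {S.g t k}

/-!
If `G_{t'}` and `G_{t''}` are both co-Bongartz completions of `J` for `G_t`, every vector of
`G_{t'}` outside `J` occurs with positive coefficient in some `g_{k;t}`, because `G_t` spans.
The negative coefficients of `g_{k;t}` in either basis sit on vectors of `J`, which belong to
both bases; adding them back gives a vector whose coordinates are nonnegative in both bases, and
the Uniqueness Condition matches its positive terms, so the chosen vector also lies in `G_{t''}`.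
-/

namespace Module.Basis

variable {ι ι' R M : Type*} [CommRing R] [AddCommGroup M] [Module R M]

lemma exists_repr_ne_zero_of_span_eq_top [Nontrivial R] (b : Basis ι R M) {κ : Type*}
    {f : κ → M} (hf : Submodule.span R (Set.range f) = ⊤) (i : ι) : ∃ k, b.repr (f k) i ≠ 0 := by
  by_contra! h
  have hker : Submodule.span R (Set.range f) ≤ LinearMap.ker (b.coord i) :=
    Submodule.span_le.2 <| by rintro _ ⟨k, rfl⟩; simpa using h k
  rw [hf, top_le_iff, LinearMap.ker_eq_top] at hker
  simpa using LinearMap.congr_fun hker (b i)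

variable [LinearOrder R]

noncomputable def negPartVec [Fintype ι] (b : Basis ι R M) (v : M) : M :=
  ∑ i, (b.repr v i)⁻ • b i

@[simp]
lemma repr_negPartVec_self [Fintype ι] (b : Basis ι R M) (v : M) (i : ι) :
    b.repr (b.negPartVec v) i = (b.repr v i)⁻ := by
  classical
  simp [negPartVec, map_sum, Finsupp.single_apply]

variable [IsStrictOrderedRing R]

lemma repr_apply_nonneg_of_mem_range (b : Basis ι R M) {x : M} (hx : x ∈ Set.range b) (i : ι) :
    0 ≤ b.repr x i := by
  obtain ⟨j, rfl⟩ := hx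
  classical
  rw [repr_self_apply]
  split_ifs <;> simp

lemma repr_negPartVec_nonneg [Fintype ι'] (b : Basis ι R M) (b' : Basis ι' R M) {v : M}
    (h : ∀ j, b'.repr v j < 0 → b' j ∈ Set.range b) (i : ι) :
    0 ≤ b.repr (b'.negPartVec v) i := by
  simp only [negPartVec, map_sum, map_smul, Finsupp.coe_finsetSum, Finsupp.coe_smul,
    Finset.sum_apply, Pi.smul_apply, smul_eq_mul]
  refine Finset.sum_nonneg fun j _ => ?_
  rcases lt_or_ge (b'.repr v j) 0 with hneg | hnonneg
  · exact mul_nonneg (negPart_nonneg _) (b.repr_apply_nonneg_of_mem_range (h j hneg) i)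
  · simp [negPart_eq_zero.2 hnonneg]

lemma posPart_repr_le_repr_add_negPartVec [Fintype ι] [Fintype ι'] (b : Basis ι R M)
    (b' : Basis ι' R M) {v : M} (h : ∀ j, b'.repr v j < 0 → b' j ∈ Set.range b) (i : ι) :
    (b.repr v i)⁺ ≤ b.repr (v + b.negPartVec v + b'.negPartVec v) i := by
  have hpos := posPart_sub_negPart (b.repr v i)
  have hnonneg := b.repr_negPartVec_nonneg b' h i
  simp only [map_add, Finsupp.coe_add, Pi.add_apply, repr_negPartVec_self]
  linarith

end Module.Basis

namespace GSystem

open Module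

variable {n : ℕ} {T : Type} {t₀ : T} (S : GSystem n T t₀)

noncomputable def basis (t : T) : Basis (Fin n) ℤ (Fin n → ℤ) :=
  .mk (S.indep t) (S.span t).ge

@[simp]
lemma coe_basis (t : T) : ⇑(S.basis t) = S.g t :=
  Basis.coe_mk _ _

lemma mem_range_of_repr_nonneg {u v : T} {x : Fin n → ℤ}
    (hu : ∀ i, 0 ≤ (S.basis u).repr x i) (hv : ∀ j, 0 ≤ (S.basis v).repr x j)
    {i₀ : Fin n} (hi₀ : 0 < (S.basis u).repr x i₀) : S.g u i₀ ∈ Set.range (S.g v) := by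
  have sum_support (w : T) :
      ∑ i ∈ ((S.basis w).repr x).support, (S.basis w).repr x i • S.g w i = x := by
    rw [Finset.sum_subset (Finset.subset_univ _) fun i _ hi => by
      rw [Finsupp.notMem_support_iff.1 hi, zero_smul]]
    simpa using (S.basis w).sum_repr x
  have pos_of_mem_support (w : T) (hw : ∀ i, 0 ≤ (S.basis w).repr x i) :
      ∀ i ∈ ((S.basis w).repr x).support, 0 < (S.basis w).repr x i :=
    fun i hi => (hw i).lt_of_ne' (Finsupp.mem_support_iff.1 hi)
  obtain ⟨σ, hσ, hmatch⟩ := S.uniqueness u v _ _ _ _ (pos_of_mem_support u hu)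
    (pos_of_mem_support v hv) ((sum_support u).trans (sum_support v).symm)
  obtain ⟨j, hj, rfl⟩ := hσ.surjOn (Finsupp.mem_support_iff.2 hi₀.ne')
  exact ⟨j, (hmatch j hj).2⟩

variable {S}

lemma IsCoB.repr_nonneg {J : Set (Fin n → ℤ)} {t t' : T} (h : S.IsCoB J t t') (k : Fin n)
    {i : Fin n} (hi : S.g t' i ∉ J) : 0 ≤ (S.basis t').repr (S.g t k) i :=
  h.2 k _ (by simpa using ((S.basis t').sum_repr (S.g t k)).symm) i hi

lemma IsCoB.mem_range_of_repr_neg {J : Set (Fin n → ℤ)} {t t' t'' : T} (h' : S.IsCoB J t t')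
    (h'' : S.IsCoB J t t'') (k j : Fin n) (hj : (S.basis t'').repr (S.g t k) j < 0) :
    S.basis t'' j ∈ Set.range (S.basis t') := by
  rw [coe_basis, coe_basis]
  by_contra hnot
  exact hj.not_ge (h''.repr_nonneg k fun hJ => hnot (h'.1 hJ))

lemma range_subset_of_isCoB {J : Set (Fin n → ℤ)} {t t' t'' : T} (h' : S.IsCoB J t t')
    (h'' : S.IsCoB J t t'') : Set.range (S.g t') ⊆ Set.range (S.g t'') := by
  rintro _ ⟨i₀, rfl⟩
  by_cases hJ : S.g t' i₀ ∈ J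
  · exact h''.1 hJ
  obtain ⟨k, hk⟩ := (S.basis t').exists_repr_ne_zero_of_span_eq_top (S.span t) i₀
  set b' := S.basis t'
  set b'' := S.basis t''
  set v := S.g t k
  have hv' := Basis.posPart_repr_le_repr_add_negPartVec b' b'' (h'.mem_range_of_repr_neg h'' k)
  have hv'' := Basis.posPart_repr_le_repr_add_negPartVec b'' b' (h''.mem_range_of_repr_neg h' k)
  rw [add_right_comm] at hv''
  refine S.mem_range_of_repr_nonneg (x := v + b'.negPartVec v + b''.negPartVec v)
    (fun i => (posPart_nonneg _).trans (hv' i)) (fun j => (posPart_nonneg _).trans (hv'' j)) ?_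
  have hpos : 0 < b'.repr v i₀ := (h'.repr_nonneg k hJ).lt_of_ne' hk
  exact hpos.trans_le (posPart_eq_self.2 hpos.le ▸ hv' i₀)

end GSystem

/-- Proposition-Definition 5.1.4: existence and uniqueness of the co-Bongartz
completion `T_J(G_t)` in a `G`-system. -/
theorem stmt1 {n : ℕ} {T : Type} {t₀ : T} (S : GSystem n T t₀) (t : T)
    (J : Set (Fin n → ℤ)) (hJ : J ⊆ Set.range (S.g t₀)) :
    ∃ t' : T, S.IsCoB J t t' ∧
      ∀ t'' : T, S.IsCoB J t t'' → Set.range (S.g t'') = Set.range (S.g t') := by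
  obtain ⟨t', hJt', hnonneg⟩ := S.coBongartz t J hJ
  have h' : S.IsCoB J t t' := ⟨hJt', hnonneg⟩
  exact ⟨t', h', fun t'' h'' =>
    (GSystem.range_subset_of_isCoB h'' h').antisymm (GSystem.range_subset_of_isCoB h' h'')⟩
end

section
/- Let G_T be a G-system at t₀, let G_t ∈ G_T, and let G_{t'} = μ_{g_{n;t}}(G_t) be the mutation of G_t at g_{n;t} (so G_{t'} agrees with G_t except in the n-th vector). If the new vector g_{n;t'} belongs to the initial basis G_{t₀}, then G_{t'} equals the elementary co-Bongartz completion T_{{g_{n;t'}}}(G_t). -/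
/-!
Let `G_{t''}` be the co-Bongartz completion of `{w}` with respect to `G_t`. Every vector `x` of
`G_t ∩ G_{t'}` lies in `G_{t''}`: expanding `x` in `G_{t''}`, all coefficients except the one of
`w` are nonnegative, so adding `c w` for a suitable `c ≥ 0` turns this into an equality between
a nonnegative combination of `G_{t''}` and the combination `x + c w` of vectors of `G_{t'}`; the
Uniqueness Condition then puts `x` into `G_{t''}`. Counting, `G_{t'}` and `G_{t''}` both equal
`{w} ∪ (G_t ∩ G_{t'})`, and being a co-Bongartz completion only depends on the underlying set.
-/

namespace GSystem

open Set

variable {n : ℕ} {T : Type} {t₀ : T} (S : GSystem n T t₀)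

theorem injective_g (u : T) : Function.Injective (S.g u) :=
  (S.indep u).injective

theorem ncard_range_g (u : T) : (range (S.g u)).ncard = n := by
  rw [← image_univ, ncard_image_of_injective _ (S.injective_g u), ncard_univ, Nat.card_fin]

theorem exists_linearCombination_eq (u : T) (x : Fin n → ℤ) :
    ∃ r : Fin n → ℤ, Fintype.linearCombination ℤ (S.g u) r = x := by
  rw [← LinearMap.mem_range, Fintype.range_linearCombination, S.span]
  trivial

theorem mem_range_of_linearCombination_eq {u v : T} {r r' : Fin n → ℤ}
    (hr : 0 ≤ r) (hr' : 0 ≤ r')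
    (h : Fintype.linearCombination ℤ (S.g u) r = Fintype.linearCombination ℤ (S.g v) r')
    {j : Fin n} (hj : 0 < r' j) : S.g v j ∈ range (S.g u) := by
  have hsupp : ∀ (c : Fin n → ℤ) (b : Fin n → Fin n → ℤ), 0 ≤ c →
      ∑ i with 0 < c i, c i • b i = Fintype.linearCombination ℤ b c := fun c b hc =>
    Finset.sum_filter_of_ne fun i _ hi => (hc i).lt_of_ne' fun h0 => hi (by simp [h0])
  obtain ⟨σ, -, hσ⟩ := S.uniqueness u v _ _ r r' (fun i hi => (Finset.mem_filter.1 hi).2)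
    (fun i hi => (Finset.mem_filter.1 hi).2) (by rw [hsupp r _ hr, hsupp r' _ hr', h])
  exact ⟨σ j, (hσ j (by simpa using hj)).2.symm⟩

theorem mem_range_of_isCoB_singleton {t t' t'' : T} {w x : Fin n → ℤ}
    (hcoB : S.IsCoB {w} t t'') (hw : w ∈ range (S.g t')) (hwt : w ∉ range (S.g t))
    (hx : x ∈ range (S.g t) ∩ range (S.g t')) : x ∈ range (S.g t'') := by
  obtain ⟨⟨k, rfl⟩, j, hj⟩ := hx
  obtain ⟨j', rfl⟩ := hw
  obtain ⟨i₀, hi₀⟩ := hcoB.1 rfl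
  obtain ⟨r, hr⟩ := S.exists_linearCombination_eq t'' (S.g t k)
  have hr_nonneg : ∀ i, i ≠ i₀ → 0 ≤ r i := fun i hi =>
    hcoB.2 k r hr.symm i fun h => hi (S.injective_g t'' (h.trans hi₀.symm))
  have hjj' : j ≠ j' := by
    rintro rfl
    exact hwt ⟨k, hj.symm⟩
  -- the multiple of `w` moved across to make the `w`-coefficient nonnegative
  set c : ℤ := max (-r i₀) 0
  have hc : 0 ≤ c := le_max_right _ _
  rw [← hj]
  refine S.mem_range_of_linearCombination_eq (r := r + Pi.single i₀ c)
    (r' := Pi.single j 1 + Pi.single j' c) ?_ ?_ ?_ (j := j) ?_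
  · intro i
    rcases eq_or_ne i i₀ with rfl | hi
    · simp only [Pi.zero_apply, Pi.add_apply, Pi.single_eq_same, c]
      omega
    · simpa [hi] using hr_nonneg i hi
  · exact add_nonneg (Pi.single_nonneg.2 zero_le_one) (Pi.single_nonneg.2 hc)
  · simp only [map_add, Fintype.linearCombination_apply_single, hr, hi₀, hj, one_smul]
  · simp [hjj']

theorem range_eq_insert_inter_of_isMutationAt {t t' u : T} {k : Fin n} {w : Fin n → ℤ}
    (hmut : S.IsMutationAt t t' k) (hw : w ∈ range (S.g u)) (hwt : w ∉ range (S.g t))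
    (hsub : range (S.g t) ∩ range (S.g t') ⊆ range (S.g u)) :
    range (S.g u) = insert w (range (S.g t) ∩ range (S.g t')) := by
  have hcard : (range (S.g t) ∩ range (S.g t')).ncard = n - 1 := by
    rw [hmut, ncard_sdiff_singleton_of_mem (mem_range_self k), S.ncard_range_g]
  refine (eq_of_subset_of_ncard_le (insert_subset hw hsub) ?_ (toFinite _)).symm
  rw [S.ncard_range_g, ncard_insert_of_notMem (fun h => hwt h.1) (toFinite _), hcard]
  omega

theorem isCoB_of_range_eq {J : Set (Fin n → ℤ)} {t u v : T}
    (h : range (S.g u) = range (S.g v)) (hu : S.IsCoB J t u) : S.IsCoB J t v := by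
  refine ⟨h ▸ hu.1, fun k r hk i hi => ?_⟩
  let e : Fin n ≃ Fin n := (Equiv.ofInjective _ (S.injective_g v)).trans
    ((Equiv.setCongr h.symm).trans (Equiv.ofInjective _ (S.injective_g u)).symm)
  have he : ∀ i, S.g u (e i) = S.g v i := fun _ =>
    Equiv.apply_ofInjective_symm (S.injective_g u) _
  have hk' : S.g t k = ∑ i, r (e.symm i) • S.g u i := by
    rw [hk, ← e.sum_comp (fun i => r (e.symm i) • S.g u i)]
    simp only [Equiv.symm_apply_apply, he]
  simpa using hu.2 k _ hk' (e i) (by rwa [he])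

end GSystem

/-- Theorem 5.1.6: if `G_{t'} = μ_{g_{n;t}}(G_t)` and the new vector `g_{n;t'}`
(the unique element of `G_{t'} \ G_t`) belongs to the initial basis `G_{t₀}`,
then `G_{t'}` is the elementary co-Bongartz completion `T_{g_{n;t'}}(G_t)`. -/
theorem stmt2 {n : ℕ} {T : Type} {t₀ : T} (S : GSystem (n + 1) T t₀) (t t' : T)
    (hmut : S.IsMutationAt t t' (Fin.last n))
    (w : Fin (n + 1) → ℤ)
    (hw : w ∈ Set.range (S.g t') \ Set.range (S.g t))
    (hw0 : w ∈ Set.range (S.g t₀)) :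
    S.IsCoB {w} t t' := by
  obtain ⟨t'', hcoB⟩ := S.coBongartz t {w} (Set.singleton_subset_iff.2 hw0)
  have hcommon : Set.range (S.g t) ∩ Set.range (S.g t') ⊆ Set.range (S.g t'') :=
    fun x hx => S.mem_range_of_isCoB_singleton hcoB hw.1 hw.2 hx
  have hrange : Set.range (S.g t'') = Set.range (S.g t') :=
    (S.range_eq_insert_inter_of_isMutationAt hmut (hcoB.1 rfl) hw.2 hcommon).trans
      (S.range_eq_insert_inter_of_isMutationAt hmut hw.1 hw.2 Set.inter_subset_right).symm
  exact S.isCoB_of_range_eq hrange hcoB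
end

section
/- Let G_T be a G-system at t₀, G_t ∈ G_T, and G_{t'} = μ_{g_{n;t}}(G_t) the mutation of G_t at its n-th vector. Let J ⊆ G_{t₀}, G_u = T_J(G_t), and G_v = T_J(G_{t'}). Then G_u and G_v share at least n−1 common vectors; consequently either G_u = G_v or G_v = μ_g(G_u) for some g ∈ G_u (they differ by a single mutation). -/
/-!
Each vector `g_{k;t}` with `k ≠ n` also lies in `G_{t'}`. Expand it in `G_u` and in `G_v`: by the
co-Bongartz property the negative coefficients only occur at vectors of `J`, which belong to both
`G_u` and `G_v`. Moving them to the other side gives two nonnegative expansions of one vector, and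
the Uniqueness Condition forces every vector of `G_u` occurring in the expansion to lie in `G_v`.
Hence the `n` linearly independent vectors `g_{k;t}`, `k ≠ n`, lie in the span of `G_u ∩ G_v`,
which therefore has at least `n` elements; as `|G_u| = |G_v| = n + 1`, the dichotomy follows.
-/

open Set Submodule

theorem exists_nonneg_sum_smul_eq_of_mem_range {R M ι κ : Type*} [Semiring R] [PartialOrder R]
    [IsOrderedAddMonoid R] [AddCommMonoid M] [Module R M] [Fintype ι] [Fintype κ]
    {f : ι → M} {g : κ → M} {c : κ → R} (hc : 0 ≤ c) (hg : ∀ j, c j ≠ 0 → g j ∈ range f) :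
    ∃ d : ι → R, 0 ≤ d ∧ ∑ j, c j • g j = ∑ i, d i • f i := by
  classical
  suffices ∀ s : Finset κ, ∃ d : ι → R, 0 ≤ d ∧ ∑ j ∈ s, c j • g j = ∑ i, d i • f i from
    this Finset.univ
  intro s
  induction s using Finset.induction_on with
  | empty => exact ⟨0, le_rfl, by simp⟩
  | insert j s hj ih =>
    obtain ⟨d, hd, hsum⟩ := ih
    rw [Finset.sum_insert hj, hsum]
    by_cases hcj : c j = 0
    · exact ⟨d, hd, by simp [hcj]⟩
    obtain ⟨i, hi⟩ := hg j hcj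
    refine ⟨Pi.single i (c j) + d, add_nonneg (Pi.single_nonneg.2 (hc j)) hd, ?_⟩
    simp [add_smul, Finset.sum_add_distrib, Pi.single_apply, ite_smul, hi]

theorem mem_span_of_sum_smul_eq {R M ι : Type*} [Semiring R] [AddCommMonoid M] [Module R M]
    [Fintype ι] {f : ι → M} {r : ι → R} {x : M} {s : Set M} (hx : x = ∑ i, r i • f i)
    (hs : ∀ i, r i ≠ 0 → f i ∈ s) : x ∈ span R s := by
  subst hx
  refine sum_mem fun i _ => ?_
  by_cases hi : r i = 0
  · simp [hi]
  · exact smul_mem _ _ (subset_span (hs i hi))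

theorem LinearIndependent.fintype_card_le_ncard {R M ι : Type*} [Ring R] [StrongRankCondition R]
    [AddCommGroup M] [Module R M] [Fintype ι] {v : ι → M} (hv : LinearIndependent R v)
    {w : Set M} (hw : w.Finite) (hvw : range v ⊆ span R w) : Fintype.card ι ≤ w.ncard := by
  have := hw.fintype
  rw [← Nat.card_coe_set_eq, Nat.card_eq_fintype_card]
  exact linearIndependent_le_span_aux' v hv w hvw

theorem Set.eq_or_exists_inter_eq_diff_singleton {α : Type*} {A B : Set α} {m : ℕ}
    (hA : A.ncard = m + 1) (hB : B.ncard = m + 1) (hAB : m ≤ (A ∩ B).ncard) :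
    A = B ∨ ∃ a ∈ A, A ∩ B = A \ {a} := by
  have hA_fin : A.Finite := finite_of_ncard_ne_zero (by omega)
  by_cases hsub : A ⊆ B
  · exact .inl (eq_of_subset_of_ncard_le hsub (by omega) (finite_of_ncard_ne_zero (by omega)))
  obtain ⟨a, haA, haB⟩ := not_subset.mp hsub
  refine .inr ⟨a, haA, eq_of_subset_of_ncard_le ?_ ?_ hA_fin.sdiff⟩
  · exact fun x ⟨hxA, hxB⟩ => ⟨hxA, fun hxa => haB (hxa ▸ hxB)⟩
  · rw [ncard_sdiff_singleton_of_mem haA, hA]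
    omega

namespace GSystem

variable {m : ℕ} {T : Type} {t₀ : T} (S : GSystem m T t₀)

theorem exists_sum_smul_eq (u : T) (x : Fin m → ℤ) : ∃ r : Fin m → ℤ, x = ∑ i, r i • S.g u i := by
  obtain ⟨r, hr⟩ := mem_span_range_iff_exists_fun ℤ |>.mp (S.span u ▸ mem_top : x ∈ _)
  exact ⟨r, hr.symm⟩

theorem mem_range_of_sum_smul_eq {u v : T} {a b : Fin m → ℤ} (ha : 0 ≤ a) (hb : 0 ≤ b)
    (h : ∑ i, a i • S.g u i = ∑ j, b j • S.g v j) {i : Fin m} (hi : 0 < a i) :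
    S.g u i ∈ range (S.g v) := by
  classical
  have sum_filter_pos {c : Fin m → ℤ} (hc : 0 ≤ c) (w : T) :
      ∑ i with 0 < c i, c i • S.g w i = ∑ i, c i • S.g w i :=
    Finset.sum_filter_of_ne fun i _ hne =>
      (hc i).lt_of_ne fun h0 => hne (by simp [← h0])
  obtain ⟨σ, hσ, hσg⟩ := S.uniqueness u v {i | 0 < a i} {j | 0 < b j} a b
    (fun i hi => (Finset.mem_filter.mp hi).2) (fun j hj => (Finset.mem_filter.mp hj).2)
    (by rw [sum_filter_pos ha, sum_filter_pos hb, h])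
  obtain ⟨j, hj, rfl⟩ := hσ.surjOn (by simpa using hi)
  exact ⟨j, (hσg j hj).2⟩

theorem mem_range_of_coeff_ne_zero {J : Set (Fin m → ℤ)} {u v : T}
    (hJu : J ⊆ range (S.g u)) (hJv : J ⊆ range (S.g v)) {x : Fin m → ℤ} {r r' : Fin m → ℤ}
    (hr : x = ∑ i, r i • S.g u i) (hr' : x = ∑ j, r' j • S.g v j)
    (hr_nonneg : ∀ i, S.g u i ∉ J → 0 ≤ r i) (hr'_nonneg : ∀ j, S.g v j ∉ J → 0 ≤ r' j)
    {i : Fin m} (hi : r i ≠ 0) : S.g u i ∈ range (S.g v) := by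
  have mem_J_of_negPart_ne_zero {w : T} {c : Fin m → ℤ} (hc : ∀ i, S.g w i ∉ J → 0 ≤ c i)
      (i : Fin m) (hi : (c i)⁻ ≠ 0) : S.g w i ∈ J :=
    not_imp_comm.mp (hc i) (by simpa using hi)
  have posPart_sum {w : T} {c : Fin m → ℤ} (hx : x = ∑ i, c i • S.g w i) :
      ∑ i, (c i)⁺ • S.g w i = x + ∑ i, (c i)⁻ • S.g w i := by
    rw [hx, ← Finset.sum_add_distrib]
    refine Finset.sum_congr rfl fun i _ => ?_
    rw [← add_smul, sub_eq_iff_eq_add.mp (posPart_sub_negPart (c i))]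
  obtain ⟨d, hd, hd_sum⟩ := exists_nonneg_sum_smul_eq_of_mem_range (f := S.g u)
    (fun j => negPart_nonneg (r' j)) fun j hj => hJu (mem_J_of_negPart_ne_zero hr'_nonneg j hj)
  obtain ⟨e, he, he_sum⟩ := exists_nonneg_sum_smul_eq_of_mem_range (f := S.g v)
    (fun i => negPart_nonneg (r i)) fun i hi => hJv (mem_J_of_negPart_ne_zero hr_nonneg i hi)
  have heq : ∑ i, ((r i)⁺ + d i) • S.g u i = ∑ j, ((r' j)⁺ + e j) • S.g v j := by
    simp only [add_smul, Finset.sum_add_distrib, posPart_sum hr, posPart_sum hr', ← hd_sum,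
      ← he_sum]
    abel
  by_cases hiJ : S.g u i ∈ J
  · exact hJv hiJ
  refine S.mem_range_of_sum_smul_eq (fun i => add_nonneg (posPart_nonneg _) (hd i))
    (fun j => add_nonneg (posPart_nonneg _) (he j)) heq ?_
  have hpos : 0 < r i := (hr_nonneg i hiJ).lt_of_ne' hi
  exact add_pos_of_pos_of_nonneg (posPart_pos hpos) (hd i)

theorem mem_span_inter_of_isCoB {J : Set (Fin m → ℤ)} {t t' u v : T} (hu : S.IsCoB J t u)
    (hv : S.IsCoB J t' v) {x : Fin m → ℤ} (hx : x ∈ range (S.g t) ∩ range (S.g t')) :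
    x ∈ Submodule.span ℤ (range (S.g u) ∩ range (S.g v)) := by
  obtain ⟨⟨k, rfl⟩, k', hk'⟩ := hx
  obtain ⟨r, hr⟩ := S.exists_sum_smul_eq u (S.g t k)
  obtain ⟨r', hr'⟩ := S.exists_sum_smul_eq v (S.g t k)
  refine mem_span_of_sum_smul_eq hr fun i hi => ⟨mem_range_self i, ?_⟩
  exact S.mem_range_of_coeff_ne_zero hu.1 hv.1 hr hr' (hu.2 k r hr)
    (hv.2 k' r' (hk'.trans hr')) hi

theorem ncard_range (w : T) : (range (S.g w)).ncard = m := by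
  simp [ncard_range_of_injective (S.indep w).injective]

end GSystem

theorem stmt7_general {n : ℕ} {T : Type} {t₀ : T} (S : GSystem (n + 1) T t₀) (t t' : T)
    (hmut : S.IsMutationAt t t' (Fin.last n))
    (J : Set (Fin (n + 1) → ℤ))
    (u v : T) (hu : S.IsCoB J t u) (hv : S.IsCoB J t' v) :
    n ≤ (Set.range (S.g u) ∩ Set.range (S.g v)).ncard ∧
    (Set.range (S.g u) = Set.range (S.g v) ∨
      ∃ k : Fin (n + 1),
        Set.range (S.g u) ∩ Set.range (S.g v) = Set.range (S.g u) \ {S.g u k}) := by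
  have hspan (k : {k : Fin (n + 1) // k ≠ Fin.last n}) :
      S.g t k ∈ span ℤ (range (S.g u) ∩ range (S.g v)) :=
    S.mem_span_inter_of_isCoB hu hv (hmut ▸ ⟨mem_range_self _, (S.indep t).injective.ne k.2⟩)
  have hle : n ≤ (range (S.g u) ∩ range (S.g v)).ncard := by
    simpa using ((S.indep t).comp _ Subtype.val_injective).fintype_card_le_ncard
      (toFinite _) (range_subset_iff.2 hspan)
  refine ⟨hle, ?_⟩
  rcases eq_or_exists_inter_eq_diff_singleton (S.ncard_range u) (S.ncard_range v) hle with
    h | ⟨_, ⟨k, rfl⟩, h⟩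
  exacts [.inl h, .inr ⟨k, h⟩]

/-- Theorem 5.2.1: if `G_{t'} = μ_{g_{n;t}}(G_t)` and `G_u = T_J(G_t)`,
`G_v = T_J(G_{t'})` for some `J ⊆ G_{t₀}`, then `G_u` and `G_v` share at least
`n - 1` common vectors; consequently either `G_u = G_v` or they are related by
a single mutation. (Here the ambient rank is `n + 1`.) -/
theorem stmt7 {n : ℕ} {T : Type} {t₀ : T} (S : GSystem (n + 1) T t₀) (t t' : T)
    (hmut : S.IsMutationAt t t' (Fin.last n))
    (J : Set (Fin (n + 1) → ℤ)) (hJ : J ⊆ Set.range (S.g t₀))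
    (u v : T) (hu : S.IsCoB J t u) (hv : S.IsCoB J t' v) :
    n ≤ (Set.range (S.g u) ∩ Set.range (S.g v)).ncard ∧
    (Set.range (S.g u) = Set.range (S.g v) ∨
      ∃ k : Fin (n + 1),
        Set.range (S.g u) ∩ Set.range (S.g v) = Set.range (S.g u) \ {S.g u k}) :=
  stmt7_general S t t' hmut J u v hu hv
end

section
/- Let D be a K-linear, Krull–Schmidt, Hom-finite triangulated category with a silting object S. Then the subcategory S ∗ S[1] is closed under extensions: if X → Y → Z → X[1] is a triangle with X, Z ∈ S ∗ S[1], then Y ∈ S ∗ S[1]. -/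
open CategoryTheory Category Limits Pretriangulated

variable {C : Type*} [Category C] [Preadditive C] [HasZeroObject C]
  [HasShift C ℤ] [∀ k : ℤ, (CategoryTheory.shiftFunctor C k).Additive]
  [Pretriangulated C] [HasFiniteBiproducts C]

/-- `X ∈ add S`: `X` is a direct summand of a finite direct sum of copies of `S`. -/
def memAdd (S X : C) : Prop :=
  ∃ (m : ℕ) (i : X ⟶ ⨁ fun _ : Fin m => S) (r : (⨁ fun _ : Fin m => S) ⟶ X),
    i ≫ r = 𝟙 X

/-- `Y ∈ S ∗ S[1]`: there is a distinguished triangle `X' → Y → Y' → X'[1]`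
with `X' ∈ add S` and `Y' ∈ add (S[1])`. -/
def memStar (S Y : C) : Prop :=
  ∃ (X' Y' : C) (f : X' ⟶ Y) (g : Y ⟶ Y') (h : Y' ⟶ X'⟦(1 : ℤ)⟧),
    memAdd S X' ∧ memAdd (S⟦(1 : ℤ)⟧) Y' ∧ Triangle.mk f g h ∈ distTriang C

/-- `S` is presilting: `Hom(S, S[i]) = 0` for all `i > 0`. -/
def IsPresilting (S : C) : Prop :=
  ∀ i : ℤ, 0 < i → ∀ f : S ⟶ S⟦i⟧, f = 0

/-- `thick(S) = D`: every property of objects closed under isomorphism, shifts,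
extensions (cones) and direct summands which holds for `S` holds everywhere. -/
def ThickGenerates (S : C) : Prop :=
  ∀ P : C → Prop,
    (∀ X Y : C, (X ≅ Y) → P X → P Y) →
    (∀ (X : C) (k : ℤ), P X → P (X⟦k⟧)) →
    (∀ T : Triangle C, (T ∈ distTriang C) → P T.obj₁ → P T.obj₃ → P T.obj₂) →
    (∀ (X Y : C) (i : X ⟶ Y) (r : Y ⟶ X), i ≫ r = 𝟙 X → P Y → P X) →
    P S → ∀ X : C, P X

/-- `S` is silting: presilting and `thick(S) = D`. -/
def IsSilting (S : C) : Prop := IsPresilting S ∧ ThickGenerates S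

/-!
Let `X' → X → X''` and `Z' → Z → Z''` exhibit `X, Z ∈ S ∗ S[1]`. Since `S` is presilting,
`Hom(Z', X[1]) = 0` and `Hom(Z[-1], X'') = 0`, so `p : Z' → Z` lifts to `s : Z' → Y` and
`b : X → X''` extends to `t : Y → X''`. Let `C` be the cone of `(a ≫ f, s) : X' ⊕ Z' → Y`.
Its second map `Y → C` factors through `(t, g ≫ q) : Y → X'' ⊕ Z''`, and such a factorization
makes `C` a direct summand of `X'' ⊕ Z'' ⊕ (X' ⊕ Z')[1] ∈ add S[1]`.
-/

attribute [local instance] hasBinaryBiproducts_of_finite_biproducts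

section Additive

variable {D : Type*} [Category D] [Preadditive D] [HasFiniteBiproducts D]

noncomputable def CategoryTheory.Retract.biprod {A B A' B' : D} (h : Retract A B)
    (h' : Retract A' B') : Retract (A ⊞ A') (B ⊞ B') where
  i := biprod.map h.i h'.i
  r := biprod.map h.r h'.r

noncomputable def biprodFinRetract (S : D) (m n : ℕ) :
    Retract ((⨁ fun _ : Fin m => S) ⊞ (⨁ fun _ : Fin n => S))
      (⨁ fun _ : Fin (m + n) => S) where
  i := biprod.desc (biproduct.desc fun j => biproduct.ι (fun _ => S) (Fin.castAdd n j))
    (biproduct.desc fun j => biproduct.ι (fun _ => S) (Fin.natAdd m j))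
  r := biprod.lift (biproduct.lift fun j => biproduct.π (fun _ => S) (Fin.castAdd n j))
    (biproduct.lift fun j => biproduct.π (fun _ => S) (Fin.natAdd m j))
  retract := by
    ext j k <;> simp [biproduct.ι_π, Fin.ext_iff] <;> omega

namespace memAdd

variable {S T A B : D}

lemma iff_retract : memAdd S A ↔ ∃ m : ℕ, Nonempty (Retract A (⨁ fun _ : Fin m => S)) :=
  ⟨fun ⟨m, i, r, h⟩ => ⟨m, ⟨⟨i, r, h⟩⟩⟩, fun ⟨m, ⟨h⟩⟩ => ⟨m, h.i, h.r, h.retract⟩⟩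

lemma of_retract (hB : memAdd S B) (h : Retract A B) : memAdd S A := by
  obtain ⟨m, ⟨h'⟩⟩ := iff_retract.mp hB
  exact iff_retract.mpr ⟨m, ⟨h.trans h'⟩⟩

lemma of_iso (e : S ≅ T) (h : memAdd S A) : memAdd T A := by
  obtain ⟨m, ⟨h⟩⟩ := iff_retract.mp h
  exact iff_retract.mpr ⟨m, ⟨h.trans (biproduct.mapIso fun _ => e).retract⟩⟩

lemma biprod (hA : memAdd S A) (hB : memAdd S B) : memAdd S (A ⊞ B) := by
  obtain ⟨m, ⟨hA⟩⟩ := iff_retract.mp hA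
  obtain ⟨n, ⟨hB⟩⟩ := iff_retract.mp hB
  exact iff_retract.mpr ⟨m + n, ⟨(hA.biprod hB).trans (biprodFinRetract S m n)⟩⟩

lemma hom_eq_zero (hA : memAdd S A) (hB : memAdd T B) (hST : ∀ φ : S ⟶ T, φ = 0)
    (φ : A ⟶ B) : φ = 0 := by
  obtain ⟨m, ⟨hA⟩⟩ := iff_retract.mp hA
  obtain ⟨n, ⟨hB⟩⟩ := iff_retract.mp hB
  have hmid : hA.r ≫ φ ≫ hB.i = 0 := by
    ext j k
    simpa using hST _
  calc φ = hA.i ≫ (hA.r ≫ φ ≫ hB.i) ≫ hB.r := by simp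
    _ = 0 := by rw [hmid, zero_comp, comp_zero]

end memAdd

end Additive

section Shift

variable {D : Type*} [Category D] [Preadditive D] [HasShift D ℤ]

lemma IsPresilting.shift_hom_eq_zero {S : D} (hS : IsPresilting S) {i j : ℤ} (hij : i < j)
    (φ : S⟦i⟧ ⟶ S⟦j⟧) : φ = 0 := by
  let e : S⟦j⟧ ≅ (S⟦j - i⟧)⟦i⟧ := (shiftFunctorAdd' D (j - i) i j (by omega)).app S
  obtain ⟨ψ, hψ⟩ := (shiftFunctor D i).map_surjective (φ ≫ e.hom)
  rw [← cancel_mono e.hom, ← hψ, hS _ (by omega) ψ, Functor.map_zero, zero_comp]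

variable [HasFiniteBiproducts D]

namespace memAdd

variable {S A : D}

lemma shift_zero (h : memAdd S A) : memAdd (S⟦(0 : ℤ)⟧) A :=
  h.of_iso ((shiftFunctorZero D ℤ).app S).symm

variable [∀ n : ℤ, (shiftFunctor D n).Additive]

lemma shift (h : memAdd S A) (n : ℤ) : memAdd (S⟦n⟧) (A⟦n⟧) := by
  obtain ⟨m, ⟨h⟩⟩ := iff_retract.mp h
  exact iff_retract.mpr
    ⟨m, ⟨(h.map (shiftFunctor D n)).trans (Functor.mapBiproduct _ _).retract⟩⟩

lemma shift_of_add_eq {i k : ℤ} (h : memAdd (S⟦i⟧) A) (n : ℤ) (hk : i + n = k) :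
    memAdd (S⟦k⟧) (A⟦n⟧) :=
  (h.shift n).of_iso ((shiftFunctorAdd' D i n k hk).app S).symm

end memAdd

lemma IsPresilting.memAdd_hom_eq_zero {S A B : D} (hS : IsPresilting S) {i j : ℤ}
    (hij : i < j) (hA : memAdd (S⟦i⟧) A) (hB : memAdd (S⟦j⟧) B) (φ : A ⟶ B) : φ = 0 :=
  hA.hom_eq_zero hB (hS.shift_hom_eq_zero hij) φ

end Shift

section Triangulated

variable {D : Type*} [Category D] [Preadditive D] [HasZeroObject D] [HasShift D ℤ]
  [∀ n : ℤ, (CategoryTheory.shiftFunctor D n).Additive] [Pretriangulated D]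

lemma CategoryTheory.Pretriangulated.Triangle.hom_to_obj₂_eq_zero {T : Triangle D}
    (hT : T ∈ distTriang D) {W : D} (h₁ : ∀ φ : W ⟶ T.obj₁, φ = 0)
    (h₃ : ∀ φ : W ⟶ T.obj₃, φ = 0) (φ : W ⟶ T.obj₂) : φ = 0 := by
  obtain ⟨ψ, rfl⟩ := T.coyoneda_exact₂ hT φ (h₃ _)
  rw [h₁ ψ, zero_comp]

lemma CategoryTheory.Pretriangulated.Triangle.hom_from_obj₂_eq_zero {T : Triangle D}
    (hT : T ∈ distTriang D) {W : D} (h₁ : ∀ φ : T.obj₁ ⟶ W, φ = 0)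
    (h₃ : ∀ φ : T.obj₃ ⟶ W, φ = 0) (φ : T.obj₂ ⟶ W) : φ = 0 := by
  obtain ⟨ψ, rfl⟩ := T.yoneda_exact₂ hT φ (h₁ _)
  rw [h₃ ψ, comp_zero]

variable [HasFiniteBiproducts D] {S : D}

namespace memStar

variable {X W : D}

lemma hom_to_shift_eq_zero (hX : memStar S X) (hS : IsPresilting S) {i n : ℤ} (hin : i < n)
    (hW : memAdd (S⟦i⟧) W) (φ : W ⟶ X⟦n⟧) : φ = 0 := by
  obtain ⟨X', X'', a, b, c, hX', hX'', hT⟩ := hX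
  exact Triangle.hom_to_obj₂_eq_zero (Triangle.shift_distinguished _ hT n)
    (hS.memAdd_hom_eq_zero (by omega) hW (hX'.shift_zero.shift_of_add_eq n rfl))
    (hS.memAdd_hom_eq_zero (by omega) hW (hX''.shift_of_add_eq n rfl)) φ

lemma hom_from_shift_eq_zero (hX : memStar S X) (hS : IsPresilting S) {i n : ℤ}
    (hni : n + 1 < i) (hW : memAdd (S⟦i⟧) W) (φ : X⟦n⟧ ⟶ W) : φ = 0 := by
  obtain ⟨X', X'', a, b, c, hX', hX'', hT⟩ := hX
  exact Triangle.hom_from_obj₂_eq_zero (Triangle.shift_distinguished _ hT n)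
    (hS.memAdd_hom_eq_zero (by omega) (hX'.shift_zero.shift_of_add_eq n rfl) hW)
    (hS.memAdd_hom_eq_zero (by omega) (hX''.shift_of_add_eq n rfl) hW) φ

end memStar

/-- `𝟙 - w ≫ χ`, where `ψ = T.mor₂ ≫ w`, kills `T.mor₂`, so it factors through `T.mor₃`:
this splits `T.obj₃` off `B ⊞ T.obj₁⟦1⟧`. -/
lemma memAdd_obj₃_of_mor₂_factors {T : Triangle D} (hT : T ∈ distTriang D) {B : D}
    (hB : memAdd S B) (hA : memAdd S (T.obj₁⟦(1 : ℤ)⟧)) (ψ : T.obj₂ ⟶ B) (χ : B ⟶ T.obj₃)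
    (hψ : T.mor₁ ≫ ψ = 0) (hχ : ψ ≫ χ = T.mor₂) : memAdd S T.obj₃ := by
  obtain ⟨w, hw⟩ := T.yoneda_exact₂ hT ψ hψ
  obtain ⟨ρ, hρ⟩ := T.yoneda_exact₃ hT (𝟙 _ - w ≫ χ)
    (by rw [Preadditive.comp_sub, comp_id, ← assoc, ← hw, hχ, sub_self])
  exact (hB.biprod hA).of_retract
    ⟨biprod.lift w T.mor₃, biprod.desc χ ρ, by rw [biprod.lift_desc, ← hρ]; abel⟩

section

variable {X' X X'' Y Z' Z Z'' : D} {a : X' ⟶ X} {b : X ⟶ X''} {c : X'' ⟶ X'⟦(1 : ℤ)⟧}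
  {f : X ⟶ Y} {g : Y ⟶ Z} {h : Z ⟶ X⟦(1 : ℤ)⟧}
  {p : Z' ⟶ Z} {q : Z ⟶ Z''} {r : Z'' ⟶ Z'⟦(1 : ℤ)⟧}
  (hTX : Triangle.mk a b c ∈ distTriang D) (hT : Triangle.mk f g h ∈ distTriang D)
  (hTZ : Triangle.mk p q r ∈ distTriang D) {s : Z' ⟶ Y} {t : Y ⟶ X''}
  (hs : s ≫ g = p) (ht : f ≫ t = b) (hst : s ≫ t = 0)

include hTX hT hTZ hs ht hst

lemma exists_biprod_lift_comp_eq {W : D} (β : Y ⟶ W) (haβ : a ≫ f ≫ β = 0)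
    (hsβ : s ≫ β = 0) : ∃ χ : X'' ⊞ Z'' ⟶ W, biprod.lift t (g ≫ q) ≫ χ = β := by
  obtain ⟨e, he⟩ : ∃ e : X'' ⟶ W, f ≫ β = b ≫ e := Triangle.yoneda_exact₂ _ hTX _ haβ
  have hfε : f ≫ (β - t ≫ e) = 0 := by
    rw [Preadditive.comp_sub, he, reassoc_of% ht, sub_self]
  obtain ⟨ε, hε⟩ : ∃ ε : Z ⟶ W, β - t ≫ e = g ≫ ε := Triangle.yoneda_exact₂ _ hT _ hfε
  have hpε : p ≫ ε = 0 := by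
    rw [← hs, assoc, ← hε, Preadditive.comp_sub, hsβ, reassoc_of% hst, zero_comp, sub_zero]
  obtain ⟨χ₂, hχ₂⟩ : ∃ χ₂ : Z'' ⟶ W, ε = q ≫ χ₂ := Triangle.yoneda_exact₂ _ hTZ _ hpε
  exact ⟨biprod.desc e χ₂, by rw [biprod.lift_desc, assoc, ← hχ₂, ← hε, add_sub_cancel]⟩

lemma memStar_of_lifts (hX' : memAdd S X') (hX'' : memAdd (S⟦(1 : ℤ)⟧) X'')
    (hZ' : memAdd S Z') (hZ'' : memAdd (S⟦(1 : ℤ)⟧) Z'') : memStar S Y := by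
  let α : X' ⊞ Z' ⟶ Y := biprod.desc (a ≫ f) s
  obtain ⟨Co, β, γ, hTα⟩ := distinguished_cocone_triangle α
  have hαβ : α ≫ β = 0 := comp_distTriang_mor_zero₁₂ _ hTα
  obtain ⟨χ, hχ⟩ := exists_biprod_lift_comp_eq hTX hT hTZ hs ht hst β
    (by simpa [α] using biprod.inl ≫= hαβ) (by simpa [α] using biprod.inr ≫= hαβ)
  have hab : a ≫ b = 0 := comp_distTriang_mor_zero₁₂ _ hTX
  have hfg : f ≫ g = 0 := comp_distTriang_mor_zero₁₂ _ hT
  have hpq : p ≫ q = 0 := comp_distTriang_mor_zero₁₂ _ hTZ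
  have hαψ : α ≫ biprod.lift t (g ≫ q) = 0 := by
    ext <;> simp [α, ht, reassoc_of% hfg, reassoc_of% hs, hab, hst, hpq]
  exact ⟨X' ⊞ Z', Co, α, β, γ, hX'.biprod hZ', memAdd_obj₃_of_mor₂_factors hTα
    (hX''.biprod hZ'') ((hX'.biprod hZ').shift 1) _ χ hαψ hχ, hTα⟩

end

end Triangulated

theorem stmt9_general (S : C) (hS : IsSilting S)
    (X Y Z : C) (f : X ⟶ Y) (g : Y ⟶ Z) (h : Z ⟶ X⟦(1 : ℤ)⟧)
    (hT : Triangle.mk f g h ∈ distTriang C)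
    (hX : memStar S X) (hZ : memStar S Z) :
    memStar S Y := by
  obtain ⟨X', X'', a, b, c, hX', hX'', hTX⟩ := id hX
  obtain ⟨Z', Z'', p, q, r, hZ', hZ'', hTZ⟩ := id hZ
  obtain ⟨s, hs⟩ := Triangle.coyoneda_exact₃ _ hT p
    (hX.hom_to_shift_eq_zero hS.1 zero_lt_one hZ'.shift_zero _)
  obtain ⟨t, ht⟩ := Triangle.yoneda_exact₂ _ (inv_rot_of_distTriang _ hT) b
    (hZ.hom_from_shift_eq_zero hS.1 (by norm_num) hX'' _)
  exact memStar_of_lifts hTX hT hTZ hs.symm ht.symm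
    (hS.1.memAdd_hom_eq_zero zero_lt_one hZ'.shift_zero hX'' _) hX' hX'' hZ' hZ''

/-- Corollary 3.3.3: for a silting object `S` of a K-linear, Hom-finite
triangulated category `D`, the subcategory `S ∗ S[1]` is closed under
extensions: if `X → Y → Z → X[1]` is a distinguished triangle with
`X, Z ∈ S ∗ S[1]`, then `Y ∈ S ∗ S[1]`. -/
theorem stmt9 (K : Type*) [Field K] [Linear K C]
    (homFinite : ∀ X Y : C, FiniteDimensional K (X ⟶ Y))
    (S : C) (hS : IsSilting S)
    (X Y Z : C) (f : X ⟶ Y) (g : Y ⟶ Z) (h : Z ⟶ X⟦(1 : ℤ)⟧)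
    (hT : Triangle.mk f g h ∈ distTriang C)
    (hX : memStar S X) (hZ : memStar S Z) :
    memStar S Y :=
  stmt9_general S hS X Y Z f g h hT hX hZ
end

section
/- Let D be a K-linear, Krull–Schmidt, Hom-finite triangulated category with a basic silting object S, and let U be a presilting object lying in S ∗ S[1]. Form the triangle U[−1] → S'' → S' → U where S' → U is a right minimal add(S)-approximation of U. Then S'' ∈ add(S). -/
/-!
The `add S`-part `f' : X' → U` of a triangle exhibiting `U ∈ S ∗ S[1]` and the approximation
`f : S' → U` factor through each other: `f'` through `f` since `f` is an approximation, and `f`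
through `f'` since `Hom(add S, add S[1]) = 0`. Right minimality upgrades this to `f` being a
retract of `f'`, so the cone `S''[1]` of `f` is a retract of the cone `Y' ∈ add S[1]` of `f'`.
-/

open CategoryTheory Category Limits Pretriangulated

variable {C : Type*} [Category C] [Preadditive C] [HasZeroObject C]
  [HasShift C ℤ] [∀ k : ℤ, (CategoryTheory.shiftFunctor C k).Additive]
  [Pretriangulated C] [HasFiniteBiproducts C]

section RightMinimal

variable {D : Type*} [Category D]

def IsRightMinimal {X Y : D} (f : X ⟶ Y) : Prop := ∀ φ : X ⟶ X, φ ≫ f = f → IsIso φ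

noncomputable def IsRightMinimal.retractArrow {X X' Y : D} {f : X ⟶ Y} (hf : IsRightMinimal f)
    {f' : X' ⟶ Y} (φ : X ⟶ X') (ψ : X' ⟶ X) (hφ : φ ≫ f' = f) (hψ : ψ ≫ f = f') :
    RetractArrow f f' :=
  have hφψ : (φ ≫ ψ) ≫ f = f := by rw [assoc, hψ, hφ]
  have : IsIso (φ ≫ ψ) := hf _ hφψ
  { i := Arrow.homMk' φ (𝟙 Y)
    r := Arrow.homMk' (ψ ≫ inv (φ ≫ ψ)) (𝟙 Y) (by
      rw [comp_id, assoc, (IsIso.inv_comp_eq _).2 hφψ.symm, hψ])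
    retract := by ext <;> simp [← assoc] }

end RightMinimal

section Triangles

variable {D : Type*} [Category D] [Preadditive D] [HasZeroObject D] [HasShift D ℤ]
  [∀ k : ℤ, (shiftFunctor D k).Additive] [Pretriangulated D]

lemma exists_triangle_hom_of_arrow_hom {T₁ T₂ : Triangle D}
    (hT₁ : T₁ ∈ distTriang D) (hT₂ : T₂ ∈ distTriang D)
    (φ : Arrow.mk T₁.mor₁ ⟶ Arrow.mk T₂.mor₁) :
    ∃ ψ : T₁ ⟶ T₂, ψ.hom₁ = φ.left ∧ ψ.hom₂ = φ.right := by
  obtain ⟨c, hc₂, hc₃⟩ :=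
    complete_distinguished_triangle_morphism T₁ T₂ hT₁ hT₂ φ.left φ.right (Arrow.w φ).symm
  exact ⟨Triangle.homMk _ _ φ.left φ.right c (Arrow.w φ).symm hc₂ hc₃, rfl, rfl⟩

lemma nonempty_retract_obj₃ {T₁ T₂ : Triangle D}
    (hT₁ : T₁ ∈ distTriang D) (hT₂ : T₂ ∈ distTriang D) (e : RetractArrow T₁.mor₁ T₂.mor₁) :
    Nonempty (Retract T₁.obj₃ T₂.obj₃) := by
  obtain ⟨α, hα₁, hα₂⟩ := exists_triangle_hom_of_arrow_hom hT₁ hT₂ e.i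
  obtain ⟨β, hβ₁, hβ₂⟩ := exists_triangle_hom_of_arrow_hom hT₂ hT₁ e.r
  have : IsIso (α ≫ β).hom₃ := isIso₃_of_isIso₁₂ _ hT₁ hT₁
    (by rw [comp_hom₁, hα₁, hβ₁, e.retract_left]; infer_instance)
    (by rw [comp_hom₂, hα₂, hβ₂, e.retract_right]; infer_instance)
  exact ⟨⟨α.hom₃, β.hom₃ ≫ inv (α ≫ β).hom₃, by rw [← assoc, ← comp_hom₃, IsIso.hom_inv_id]⟩⟩

end Triangles

section AddCategory

variable {A : Type*} [Category A] [Preadditive A] [HasFiniteBiproducts A] {T X Y : A}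

lemma memAdd_of_retract (e : Retract X Y) (hY : memAdd T Y) : memAdd T X := by
  obtain ⟨m, i, r, hir⟩ := hY
  exact ⟨m, e.i ≫ i, r ≫ e.r, by simp [reassoc_of% hir]⟩

variable [HasShift A ℤ]

lemma IsPresilting.hom_eq_zero (hT : IsPresilting T) {i : ℤ} (hi : 0 < i)
    (hX : memAdd T X) (hY : memAdd (T⟦i⟧) Y) (φ : X ⟶ Y) : φ = 0 := by
  obtain ⟨m, s, r, hsr⟩ := hX
  obtain ⟨n, s', r', hsr'⟩ := hY
  have : r ≫ φ ≫ s' = 0 := by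
    ext
    simpa using hT i hi _
  calc φ = s ≫ (r ≫ φ ≫ s') ≫ r' := by simp [reassoc_of% hsr, hsr']
    _ = 0 := by simp [this]

variable [∀ k : ℤ, (shiftFunctor A k).Additive]

lemma memAdd_of_memAdd_shift (k : ℤ) (h : memAdd (T⟦k⟧) (X⟦k⟧)) : memAdd T X := by
  obtain ⟨m, i, r, hir⟩ := h
  let e := (shiftFunctor A k).mapBiproduct (fun _ : Fin m => T)
  refine ⟨m, (shiftFunctor A k).preimage (i ≫ e.inv), (shiftFunctor A k).preimage (e.hom ≫ r),
    (shiftFunctor A k).map_injective ?_⟩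
  simp [hir]

end AddCategory

theorem stmt10_general
    (S : C) (hS : IsSilting S)
    (U : C) (hUstar : memStar S U)
    (S'' S' : C) (a : S'' ⟶ S') (f : S' ⟶ U) (b : U ⟶ S''⟦(1 : ℤ)⟧)
    (hT : Triangle.mk a f b ∈ distTriang C)
    (hS' : memAdd S S')
    (happrox : ∀ W : C, memAdd S W → ∀ φ : W ⟶ U, ∃ ψ : W ⟶ S', ψ ≫ f = φ)
    (hmin : ∀ φ : S' ⟶ S', φ ≫ f = f → IsIso φ) :
    memAdd S S'' := by
  obtain ⟨X', Y', f', g, h, hX', hY', hT'⟩ := hUstar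
  obtain ⟨ψ, hψ⟩ := happrox X' hX' f'
  obtain ⟨φ, hφ⟩ := Triangle.coyoneda_exact₂ _ hT' f (hS.1.hom_eq_zero one_pos hS' hY' _)
  obtain ⟨e⟩ := nonempty_retract_obj₃ (rot_of_distTriang _ hT) hT'
    (IsRightMinimal.retractArrow hmin φ ψ hφ.symm hψ)
  exact memAdd_of_memAdd_shift 1 (memAdd_of_retract e hY')

/-- Proposition 3.4.2: let `S` be a basic silting object of a K-linear,
Krull–Schmidt, Hom-finite triangulated category `D` and let `U` be a presilting
(rigid) object lying in `S ∗ S[1]`.  If `S'' → S' → U → S''[1]` is a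
distinguished triangle in which `f : S' → U` is a right minimal
`add S`-approximation of `U`, then `S'' ∈ add S`. -/
theorem stmt10 (K : Type*) [Field K] [Linear K C]
    (homFinite : ∀ X Y : C, FiniteDimensional K (X ⟶ Y))
    (S : C) (hS : IsSilting S)
    (U : C) (hU : IsPresilting U) (hUstar : memStar S U)
    (S'' S' : C) (a : S'' ⟶ S') (f : S' ⟶ U) (b : U ⟶ S''⟦(1 : ℤ)⟧)
    (hT : Triangle.mk a f b ∈ distTriang C)
    (hS' : memAdd S S')
    (happrox : ∀ W : C, memAdd S W → ∀ φ : W ⟶ U, ∃ ψ : W ⟶ S', ψ ≫ f = φ)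
    (hmin : ∀ φ : S' ⟶ S', φ ≫ f = f → IsIso φ) :
    memAdd S S'' :=
  stmt10_general S hS U hUstar S'' S' a f b hT hS' happrox hmin
end
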